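/- arXiv:2301.11038 — 3 statements merged into one kernel-verified Lean document; each statement's English description precedes it below -/
import Mathlib

section
/- For every integer n > 2 and every s in (0, π), the quantity ω(s) = sin^n(s) - (n-1)·cos(s)·∫₀^s sin^{n-1}(u) du is positive. -/
/-! Writing `sin^(n-1) s = (n-1) ∫₀ˢ sin^(n-2) u cos u du` turns `ω(s)` into
`(n-1) ∫₀ˢ sin^(n-2) u (sin s cos u - cos s sin u) du = (n-1) ∫₀ˢ sin^(n-2) u sin (s - u) du`,
whose integrand is positive on `(0, s)` as soon as `0 < s < π`. -/

open Real intervalIntegral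

theorem integral_sin_pow_mul_cos (m : ℕ) (s : ℝ) :
    (m + 1 : ℝ) * ∫ u in (0 : ℝ)..s, sin u ^ m * cos u = sin s ^ (m + 1) := by
  have hderiv (x : ℝ) :
      HasDerivAt (fun y => sin y ^ (m + 1)) ((m + 1 : ℝ) * (sin x ^ m * cos x)) x := by
    refine ((hasDerivAt_sin x).fun_pow (m + 1)).congr_deriv ?_
    push_cast; ring
  rw [← integral_const_mul, integral_eq_sub_of_hasDerivAt (fun x _ => hderiv x)
    (by apply Continuous.intervalIntegrable; fun_prop)]
  simp

theorem sin_pow_sub_cos_mul_integral_sin_pow_eq (m : ℕ) (s : ℝ) :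
    sin s ^ (m + 2) - (m + 1 : ℝ) * cos s * ∫ u in (0 : ℝ)..s, sin u ^ (m + 1) =
      (m + 1 : ℝ) * ∫ u in (0 : ℝ)..s, sin u ^ m * sin (s - u) := by
  have hint : IntervalIntegrable (fun u => sin u ^ m * cos u) MeasureTheory.volume 0 s := by
    apply Continuous.intervalIntegrable; fun_prop
  have hint' : IntervalIntegrable (fun u => sin u ^ (m + 1)) MeasureTheory.volume 0 s := by
    apply Continuous.intervalIntegrable; fun_prop
  have hsplit : (fun u => sin u ^ m * sin (s - u)) =
      fun u => sin s * (sin u ^ m * cos u) - cos s * sin u ^ (m + 1) := by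
    funext u; rw [sin_sub]; ring
  rw [hsplit, integral_sub (hint.const_mul _) (hint'.const_mul _), integral_const_mul,
    integral_const_mul, pow_succ' _ (m + 1), ← integral_sin_pow_mul_cos m s]
  ring

theorem integral_sin_pow_mul_sin_sub_pos (m : ℕ) {s : ℝ} (hs : s ∈ Set.Ioo 0 π) :
    0 < ∫ u in (0 : ℝ)..s, sin u ^ m * sin (s - u) := by
  obtain ⟨hs0, hsπ⟩ := hs
  refine intervalIntegral_pos_of_pos_on
    (by apply Continuous.intervalIntegrable; fun_prop) (fun u hu => ?_) hs0
  have hsin_u : 0 < sin u := sin_pos_of_pos_of_lt_pi hu.1 (hu.2.trans hsπ)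
  have hsin_su : 0 < sin (s - u) :=
    sin_pos_of_pos_of_lt_pi (sub_pos.mpr hu.2) (by linarith [hu.1])
  positivity

theorem stmt9 (n : ℕ) (hn : 2 < n) :
    ∀ s ∈ Set.Ioo (0:ℝ) Real.pi,
      0 < Real.sin s ^ n - ((n:ℝ) - 1) * Real.cos s * ∫ u in (0:ℝ)..s, Real.sin u ^ (n - 1) := by
  intro s hs
  obtain ⟨m, rfl⟩ : ∃ m, n = m + 2 := ⟨n - 2, by omega⟩
  have hcoeff : ((m + 2 : ℕ) : ℝ) - 1 = m + 1 := by push_cast; ring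
  rw [hcoeff, show m + 2 - 1 = m + 1 by omega, sin_pow_sub_cos_mul_integral_sin_pow_eq]
  exact mul_pos m.cast_add_one_pos (integral_sin_pow_mul_sin_sub_pos m hs)
end

section
/- For n ≥ 2, the hyperbolic function φ(s) = (∫₀^s sinh(u)^{n-1} du)/sinh(s)^{n-1} satisfies φ''(s) < 0 for all s > 0. -/
/-!
With `m = n - 1` and `F(s) = ∫₀^s sinh^m`, we have `φ = F / sinh^m`, and using `cosh² = 1 + sinh²`,
`φ'' = m ((1 + m cosh²) F - cosh sinh^(m+1)) / sinh^(m+2)`.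
So `φ'' < 0` amounts to `F < cosh sinh^(m+1) / (1 + m cosh²)`. Both sides vanish at `0`, and the
derivative of the right side is `sinh^m + 2 sinh^(m+2) / (1 + m cosh²)²`, which exceeds `F' = sinh^m`.
-/

open Real Filter Topology

noncomputable def sinhPowIntegral (m : ℕ) (s : ℝ) : ℝ := ∫ u in (0:ℝ)..s, sinh u ^ m

lemma hasDerivAt_sinhPowIntegral (m : ℕ) (s : ℝ) :
    HasDerivAt (sinhPowIntegral m) (sinh s ^ m) s := by
  have hc : Continuous fun u : ℝ => sinh u ^ m := continuous_sinh.pow m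
  exact intervalIntegral.integral_hasDerivAt_right (hc.intervalIntegrable _ _)
    (hc.stronglyMeasurableAtFilter _ _) hc.continuousAt

lemma one_add_mul_cosh_sq_pos (m : ℕ) (s : ℝ) : 0 < 1 + m * cosh s ^ 2 := by
  have := cosh_pos s
  positivity

lemma hasDerivAt_cosh_mul_sinh_pow_div (m : ℕ) (s : ℝ) :
    HasDerivAt (fun x => cosh x * sinh x ^ (m + 1) / (1 + m * cosh x ^ 2))
      (sinh s ^ m + 2 * sinh s ^ (m + 2) / (1 + m * cosh s ^ 2) ^ 2) s := by
  have hQ := one_add_mul_cosh_sq_pos m s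
  have hnum := (hasDerivAt_cosh s).fun_mul ((hasDerivAt_sinh s).fun_pow (m + 1))
  have hden := (((hasDerivAt_cosh s).fun_pow 2).const_mul (m : ℝ)).const_add 1
  refine (hnum.div hden hQ.ne').congr_deriv ?_
  field_simp
  push_cast
  linear_combination (sinh s ^ m * (1 + m * cosh s ^ 2)) * cosh_sq s

lemma sinhPowIntegral_lt (m : ℕ) {s : ℝ} (hs : 0 < s) :
    sinhPowIntegral m s < cosh s * sinh s ^ (m + 1) / (1 + m * cosh s ^ 2) := by
  set G : ℝ → ℝ := fun x => cosh x * sinh x ^ (m + 1) / (1 + m * cosh x ^ 2)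
  have hD : ∀ x, HasDerivAt (fun x => G x - sinhPowIntegral m x)
      (2 * sinh x ^ (m + 2) / (1 + m * cosh x ^ 2) ^ 2) x := fun x =>
    ((hasDerivAt_cosh_mul_sinh_pow_div m x).sub (hasDerivAt_sinhPowIntegral m x)).congr_deriv
      (by ring)
  have hmono : StrictMonoOn (fun x => G x - sinhPowIntegral m x) (Set.Ici 0) := by
    refine strictMonoOn_of_hasDerivWithinAt_pos (convex_Ici 0)
      (fun x _ => (hD x).continuousAt.continuousWithinAt) (fun x _ => (hD x).hasDerivWithinAt)
      fun x hx => ?_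
    rw [interior_Ici] at hx
    have := sinh_pos_iff.2 hx
    positivity
  simpa [G, sinhPowIntegral] using hmono Set.self_mem_Ici hs.le hs

lemma hasDerivAt_sinhPowIntegral_div (m : ℕ) {s : ℝ} (hs : sinh s ≠ 0) :
    HasDerivAt (fun x => sinhPowIntegral m x / sinh x ^ m)
      (1 - m * cosh s * sinhPowIntegral m s / sinh s ^ (m + 1)) s := by
  refine ((hasDerivAt_sinhPowIntegral m s).div ((hasDerivAt_sinh s).fun_pow m)
    (pow_ne_zero m hs)).congr_deriv ?_
  rcases m with _ | m
  · simp
  · simp only [Nat.add_sub_cancel]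
    field_simp
    ring

lemma hasDerivAt_one_sub_cosh_mul_sinhPowIntegral_div (m : ℕ) {s : ℝ} (hs : sinh s ≠ 0) :
    HasDerivAt (fun x => 1 - m * cosh x * sinhPowIntegral m x / sinh x ^ (m + 1))
      (m * ((1 + m * cosh s ^ 2) * sinhPowIntegral m s - cosh s * sinh s ^ (m + 1))
        / sinh s ^ (m + 2)) s := by
  have hnum := ((hasDerivAt_cosh s).const_mul (m : ℝ)).fun_mul (hasDerivAt_sinhPowIntegral m s)
  have hquot := hnum.div ((hasDerivAt_sinh s).fun_pow (m + 1)) (pow_ne_zero _ hs)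
  refine (hquot.const_sub 1).congr_deriv ?_
  field_simp
  push_cast
  linear_combination (m * sinhPowIntegral m s * sinh s ^ (2 * m + 2)) * cosh_sq s

theorem stmt12 (n : ℕ) (hn : 2 ≤ n)
    (φ : ℝ → ℝ)
    (hφ : ∀ s > (0:ℝ), φ s = (∫ u in (0:ℝ)..s, Real.sinh u ^ (n - 1)) / Real.sinh s ^ (n - 1)) :
    ∀ s > (0:ℝ), deriv (deriv φ) s < 0 := by
  intro s hs
  obtain ⟨m, rfl⟩ : ∃ m, n = m + 1 := ⟨n - 1, by omega⟩
  have hm : (0 : ℝ) < m := by exact_mod_cast (by omega : 0 < m)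
  have hsinh : ∀ x > (0:ℝ), sinh x ≠ 0 := fun x hx => (sinh_pos_iff.2 hx).ne'
  have hderiv :
      deriv φ =ᶠ[𝓝 s] fun x => 1 - m * cosh x * sinhPowIntegral m x / sinh x ^ (m + 1) := by
    filter_upwards [Ioi_mem_nhds hs] with x hx
    have hφx : φ =ᶠ[𝓝 x] fun x => sinhPowIntegral m x / sinh x ^ m := by
      filter_upwards [Ioi_mem_nhds hx] with y hy using hφ y hy
    rw [hφx.deriv_eq, (hasDerivAt_sinhPowIntegral_div m (hsinh x hx)).deriv]
  rw [hderiv.deriv_eq, (hasDerivAt_one_sub_cosh_mul_sinhPowIntegral_div m (hsinh s hs)).deriv]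
  have hbound := sinhPowIntegral_lt m hs
  rw [lt_div_iff₀ (one_add_mul_cosh_sq_pos m s)] at hbound
  have := sinh_pos_iff.2 hs
  exact div_neg_of_neg_of_pos (mul_neg_of_pos_of_neg hm (by linarith)) (by positivity)
end

section
/- In the spherical case with 0 < s0 < π/2, the function φ(s) = (∫₀^s sin(u)^{n-1} du)/sin(s)^{n-1} satisfies φ'(s) > cot(s)·φ(s) for all s in (0, s0]. -/
/-! With `m = n - 1` and `F(s) = ∫₀^s sin^m`, the quotient `φ = F / sin^m` solves
`φ' = 1 - m cot φ`, so the claim is `(m + 1) cos s F(s) < sin^{m+1} s`. The difference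
`sin^{m+1} - (m + 1) cos F` vanishes at `0` and has derivative `(m + 1) sin F > 0` on `(0, π)`. -/

open Real Set

noncomputable def sinPowIntegral (m : ℕ) (s : ℝ) : ℝ := ∫ u in (0:ℝ)..s, sin u ^ m

noncomputable def sinPowRatio (m : ℕ) (s : ℝ) : ℝ := sinPowIntegral m s / sin s ^ m

theorem hasDerivAt_sinPowIntegral (m : ℕ) (s : ℝ) :
    HasDerivAt (sinPowIntegral m) (sin s ^ m) s :=
  ((continuous_sin.pow m).integral_hasStrictDerivAt 0 s).hasDerivAt

theorem sinPowIntegral_pos (m : ℕ) {s : ℝ} (hs : 0 < s) (hsπ : s < π) :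
    0 < sinPowIntegral m s :=
  intervalIntegral.intervalIntegral_pos_of_pos_on ((continuous_sin.pow m).intervalIntegrable _ _)
    (fun _ hx => pow_pos (sin_pos_of_pos_of_lt_pi hx.1 (hx.2.trans hsπ)) m) hs

theorem succ_mul_cos_mul_sinPowIntegral_lt (m : ℕ) {s : ℝ} (hs : 0 < s) (hsπ : s < π) :
    (m + 1) * cos s * sinPowIntegral m s < sin s ^ (m + 1) := by
  set h : ℝ → ℝ := fun x => sin x ^ (m + 1) - (m + 1) * cos x * sinPowIntegral m x
  have hderiv (x : ℝ) : HasDerivAt h ((m + 1) * sin x * sinPowIntegral m x) x := by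
    have hsin := (hasDerivAt_sin x).fun_pow (m + 1)
    have hcos := ((hasDerivAt_cos x).const_mul ((m : ℝ) + 1)).mul (hasDerivAt_sinPowIntegral m x)
    refine (hsin.sub hcos).congr_deriv ?_
    push_cast
    ring
  have hmono : StrictMonoOn h (Icc 0 s) := by
    refine strictMonoOn_of_hasDerivWithinAt_pos (convex_Icc 0 s)
      (fun x _ => (hderiv x).continuousAt.continuousWithinAt)
      (fun x _ => (hderiv x).hasDerivWithinAt) fun x hx => ?_
    rw [interior_Icc] at hx
    have hxπ : x < π := hx.2.trans hsπ
    have := sin_pos_of_pos_of_lt_pi hx.1 hxπ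
    have := sinPowIntegral_pos m hx.1 hxπ
    positivity
  have h0s := hmono (left_mem_Icc.2 hs.le) (right_mem_Icc.2 hs.le) hs
  simpa [h, sinPowIntegral] using h0s

theorem hasDerivAt_sinPowRatio (m : ℕ) {s : ℝ} (hs : sin s ≠ 0) :
    HasDerivAt (sinPowRatio m) (1 - m * (cos s / sin s) * sinPowRatio m s) s := by
  have hquot := (hasDerivAt_sinPowIntegral m s).div ((hasDerivAt_sin s).fun_pow m)
    (pow_ne_zero m hs)
  refine hquot.congr_deriv ?_
  rw [sinPowRatio]
  rcases m with _ | k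
  · simp
  · field_simp
    simp only [Nat.add_sub_cancel]
    push_cast
    ring

theorem succ_mul_cot_mul_sinPowRatio_lt_one (m : ℕ) {s : ℝ} (hs : 0 < s) (hsπ : s < π) :
    (m + 1) * (cos s / sin s * sinPowRatio m s) < 1 := by
  have hsin := sin_pos_of_pos_of_lt_pi hs hsπ
  rw [sinPowRatio, div_mul_div_comm, ← pow_succ', ← mul_div_assoc, div_lt_one (by positivity)]
  simpa [mul_assoc] using succ_mul_cos_mul_sinPowIntegral_lt m hs hsπ

theorem stmt16_general (n : ℕ) (s0 : ℝ) (hs0' : s0 < Real.pi / 2)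
    (φ : ℝ → ℝ)
    (hφ : ∀ s > (0:ℝ), φ s = (∫ u in (0:ℝ)..s, Real.sin u ^ (n - 1)) / Real.sin s ^ (n - 1)) :
    ∀ s ∈ Set.Ioc (0:ℝ) s0, (Real.cos s / Real.sin s) * φ s < deriv φ s := by
  rintro s ⟨hs, hss0⟩
  have hsπ : s < π := by linarith [pi_pos]
  have hφ_eq : φ =ᶠ[nhds s] sinPowRatio (n - 1) :=
    Filter.eventuallyEq_of_mem (Ioi_mem_nhds hs) hφ
  rw [hφ_eq.deriv_eq, hφ_eq.eq_of_nhds,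
    (hasDerivAt_sinPowRatio (n - 1) (sin_pos_of_pos_of_lt_pi hs hsπ).ne').deriv]
  linarith [succ_mul_cot_mul_sinPowRatio_lt_one (n - 1) hs hsπ]

theorem stmt16 (n : ℕ) (hn : 2 ≤ n) (s0 : ℝ) (hs0 : 0 < s0) (hs0' : s0 < Real.pi / 2)
    (φ : ℝ → ℝ)
    (hφ : ∀ s > (0:ℝ), φ s = (∫ u in (0:ℝ)..s, Real.sin u ^ (n - 1)) / Real.sin s ^ (n - 1)) :
    ∀ s ∈ Set.Ioc (0:ℝ) s0, (Real.cos s / Real.sin s) * φ s < deriv φ s :=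
  stmt16_general n s0 hs0' φ hφ
end
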